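/- The state-independent disturbance satisfies the upper bound η(𝒜',ℬ) ≤ max_{1≤i≤d} max_{1≤j≤d} ( |⟨a'_j, b_i⟩| · Σ_{k≠j} |⟨a'_k, b_i⟩| ). -/

import Mathlib

open scoped ComplexInnerProductSpace

noncomputable section

variable {H : Type*} [NormedAddCommGroup H] [InnerProductSpace ℂ H] [FiniteDimensional ℂ H]
variable {ι ι' : Type*} [Fintype ι] [Fintype ι']

/-- The rank-one projector `|v⟩⟨v|`. -/
def ketbra (v : H) : H →ₗ[ℂ] H where
  toFun x := ⟪v, x⟫ • v
  map_add' x y := by simp [inner_add_right, add_smul]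
  map_smul' c x := by simp [inner_smul_right, mul_smul]

/-- A density operator: self-adjoint, positive semidefinite, trace one. -/
def IsDensity (ρ : H →ₗ[ℂ] H) : Prop :=
  LinearMap.IsSymmetric ρ ∧ (∀ x : H, 0 ≤ (⟪x, ρ x⟫).re) ∧
    LinearMap.trace ℂ H ρ = 1

/-- The state-dependent error `ε_ρ(𝒜,𝒜')`. -/
def sdError (a a' : ι → H) (ρ : H →ₗ[ℂ] H) : ℝ :=
  ⨆ i : ι, ‖LinearMap.trace ℂ H (ρ ∘ₗ (ketbra (a i) - ketbra (a' i)))‖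

/-- The state-independent error `ε(𝒜,𝒜')`. -/
def siError (a a' : ι → H) : ℝ :=
  ⨆ ρ : {ρ : H →ₗ[ℂ] H // IsDensity ρ}, sdError a a' ρ.1

/-- The operator `|b_i⟩⟨b_i| − Σ_j |⟨a'_j, b_i⟩|² |a'_j⟩⟨a'_j|`. -/
def distOp (a' : ι' → H) (b : ι → H) (i : ι) : H →ₗ[ℂ] H :=
  ketbra (b i) - ∑ j : ι', (‖⟪a' j, b i⟫‖ ^ 2 : ℂ) • ketbra (a' j)

/-- The state-dependent disturbance `η_ρ(𝒜',ℬ)`. -/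
def sdDist (a' : ι' → H) (b : ι → H) (ρ : H →ₗ[ℂ] H) : ℝ :=
  ⨆ i : ι, ‖LinearMap.trace ℂ H (ρ ∘ₗ distOp a' b i)‖

/-- The state-independent disturbance `η(𝒜',ℬ)`. -/
def siDist (a' : ι' → H) (b : ι → H) : ℝ :=
  ⨆ ρ : {ρ : H →ₗ[ℂ] H // IsDensity ρ}, sdDist a' b ρ.1

/-- The state-independent overall error `Δ(𝒜,𝒜',ℬ)`. -/
def siOverall (a a' b : ι → H) : ℝ :=
  ⨆ ρ : {ρ : H →ₗ[ℂ] H // IsDensity ρ}, (sdError a a' ρ.1 + sdDist a' b ρ.1)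

/-!
Expanding `b i = ∑ₖ cₖ a'ₖ` with `cₖ = ⟪a'ₖ, b i⟫`, the trace `tr (ρ D)` of the disturbance
operator is the off-diagonal part `∑_{j ≠ k} c̄ⱼ cₖ ρⱼₖ` of `⟪b i, ρ (b i)⟫`. Positivity of `ρ`
gives `2 |ρⱼₖ| ≤ ρⱼⱼ + ρₖₖ`; symmetrising in `j, k` bounds the sum by `∑ⱼ ρⱼⱼ |cⱼ| ∑_{k ≠ j} |cₖ|`,
and since the `ρⱼⱼ` are nonnegative with sum `tr ρ = 1`, this is at most the largest row term.
-/

open Finset RCLike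
open scoped InnerProductSpace ComplexConjugate

section OffDiagonal

variable {ι : Type*} [Fintype ι] [DecidableEq ι]

theorem Finset.sum_sum_erase_swap {M : Type*} [AddCommMonoid M] (f : ι → ι → M) :
    ∑ j, ∑ k ∈ univ.erase j, f j k = ∑ j, ∑ k ∈ univ.erase j, f k j :=
  sum_comm' fun j k => by simp only [mem_univ, mem_erase, true_and, and_true, ne_comm]

theorem sum_sum_erase_mul_mul_le {w p : ι → ℝ} {r : ι → ι → ℝ} (hw : ∀ j, 0 ≤ w j)
    (hr : ∀ j k, 2 * r j k ≤ p j + p k) :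
    ∑ j, ∑ k ∈ univ.erase j, w j * w k * r j k ≤
      ∑ j, p j * (w j * ∑ k ∈ univ.erase j, w k) := by
  have hsymm : ∑ j, ∑ k ∈ univ.erase j, w j * w k * p k =
      ∑ j, ∑ k ∈ univ.erase j, w j * w k * p j := by
    rw [sum_sum_erase_swap]
    exact sum_congr rfl fun j _ => sum_congr rfl fun k _ => by ring
  refine le_of_mul_le_mul_left (?_ : (2 : ℝ) * _ ≤ 2 * _) two_pos
  calc 2 * ∑ j, ∑ k ∈ univ.erase j, w j * w k * r j k
      ≤ ∑ j, ∑ k ∈ univ.erase j, (w j * w k * p j + w j * w k * p k) := by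
        simp only [mul_sum]
        refine sum_le_sum fun j _ => sum_le_sum fun k _ => ?_
        nlinarith [hr j k, mul_nonneg (hw j) (hw k)]
    _ = 2 * ∑ j, p j * (w j * ∑ k ∈ univ.erase j, w k) := by
        simp only [sum_add_distrib, hsymm, ← two_mul, mul_sum]
        exact sum_congr rfl fun j _ => sum_congr rfl fun k _ => by ring

end OffDiagonal

section RCLike

variable {𝕜 E ι : Type*} [RCLike 𝕜] [NormedAddCommGroup E] [InnerProductSpace 𝕜 E] [Fintype ι]

theorem LinearMap.IsPositive.two_mul_re_inner_le {T : E →ₗ[𝕜] E} (hT : T.IsPositive) (x y : E) :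
    2 * re ⟪x, T y⟫_𝕜 ≤ re ⟪x, T x⟫_𝕜 + re ⟪y, T y⟫_𝕜 := by
  have hsub := hT.re_inner_nonneg_right (x - y)
  have hyx : re ⟪y, T x⟫_𝕜 = re ⟪x, T y⟫_𝕜 := by
    rw [← hT.isSymmetric, inner_re_symm]
  simp only [map_sub, inner_sub_left, inner_sub_right, hyx] at hsub
  linarith

theorem LinearMap.IsPositive.two_mul_norm_inner_le {T : E →ₗ[𝕜] E} (hT : T.IsPositive)
    (x y : E) : 2 * ‖⟪x, T y⟫_𝕜‖ ≤ re ⟪x, T x⟫_𝕜 + re ⟪y, T y⟫_𝕜 := by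
  obtain ⟨c, hc, hphase⟩ := exists_norm_eq_mul_self ⟪x, T y⟫_𝕜
  have h := hT.two_mul_re_inner_le x (c • y)
  rwa [map_smul, inner_smul_right, ← hphase, ofReal_re, inner_smul_left, inner_smul_right,
    ← mul_assoc, RCLike.conj_mul, hc, ofReal_one, one_pow, one_mul] at h

theorem OrthonormalBasis.inner_map_self_eq_sum_sum (e : OrthonormalBasis ι 𝕜 E)
    (T : E →ₗ[𝕜] E) (v : E) :
    ⟪v, T v⟫_𝕜 = ∑ j, ∑ k, conj ⟪e j, v⟫_𝕜 * ⟪e k, v⟫_𝕜 * ⟪e j, T (e k)⟫_𝕜 := by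
  conv_lhs => rw [← e.sum_repr' v]
  simp only [map_sum, map_smul, sum_inner, inner_sum, inner_smul_left, inner_smul_right,
    mul_sum]
  rw [sum_comm]
  exact sum_congr rfl fun j _ => sum_congr rfl fun k _ => by ring

theorem LinearMap.IsPositive.norm_sum_sum_erase_le [DecidableEq ι] {T : E →ₗ[𝕜] E}
    (hT : T.IsPositive) (e : ι → E) (c : ι → 𝕜) :
    ‖∑ j, ∑ k ∈ univ.erase j, conj (c j) * c k * ⟪e j, T (e k)⟫_𝕜‖ ≤
      ∑ j, re ⟪e j, T (e j)⟫_𝕜 * (‖c j‖ * ∑ k ∈ univ.erase j, ‖c k‖) :=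
  calc _ ≤ ∑ j, ∑ k ∈ univ.erase j, ‖c j‖ * ‖c k‖ * ‖⟪e j, T (e k)⟫_𝕜‖ :=
        (norm_sum_le _ _).trans <| sum_le_sum fun j _ => (norm_sum_le _ _).trans_eq <|
          sum_congr rfl fun k _ => by rw [norm_mul, norm_mul, norm_conj]
    _ ≤ _ := sum_sum_erase_mul_mul_le (fun j => norm_nonneg (c j))
        fun j k => hT.two_mul_norm_inner_le (e j) (e k)

end RCLike

omit [FiniteDimensional ℂ H] in
theorem IsDensity.isPositive {ρ : H →ₗ[ℂ] H} (hρ : IsDensity ρ) : ρ.IsPositive :=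
  ⟨hρ.1, fun x => by rw [← inner_re_symm]; exact hρ.2.1 x⟩

omit [FiniteDimensional ℂ H] in
theorem IsDensity.sum_re_inner_eq_one {ρ : H →ₗ[ℂ] H} (hρ : IsDensity ρ)
    (e : OrthonormalBasis ι ℂ H) : ∑ j, re ⟪e j, ρ (e j)⟫ = 1 := by
  rw [← map_sum, ← LinearMap.trace_eq_sum_inner, hρ.2.2, one_re]

theorem trace_comp_ketbra (T : H →ₗ[ℂ] H) (v : H) :
    LinearMap.trace ℂ H (T ∘ₗ ketbra v) = ⟪v, T v⟫ := by
  have h : T ∘ₗ ketbra v = (innerₛₗ ℂ v).smulRight (T v) := by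
    ext x
    simp [ketbra]
  rw [h, LinearMap.trace_smulRight, innerₛₗ_apply_apply]

omit [Fintype ι] in
theorem trace_comp_distOp [DecidableEq ι'] (e : OrthonormalBasis ι' ℂ H) (b : ι → H) (i : ι)
    (ρ : H →ₗ[ℂ] H) :
    LinearMap.trace ℂ H (ρ ∘ₗ distOp e b i) =
      ∑ j, ∑ k ∈ univ.erase j, conj ⟪e j, b i⟫ * ⟪e k, b i⟫ * ⟪e j, ρ (e k)⟫ := by
  rw [distOp, ← Module.End.mul_eq_comp, mul_sub, mul_sum, map_sub, map_sum]
  simp only [mul_smul_comm, map_smul, Module.End.mul_eq_comp, trace_comp_ketbra,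
    e.inner_map_self_eq_sum_sum ρ (b i)]
  rw [← sum_sub_distrib]
  refine sum_congr rfl fun j _ => ?_
  rw [sum_erase_eq_sub (mem_univ j), smul_eq_mul, ← Complex.conj_mul']

theorem disturbance_upper_bound_two_general {d : ℕ}
    (a' b : OrthonormalBasis (Fin d) ℂ H) :
    siDist (⇑a') (⇑b) ≤ ⨆ i : Fin d, ⨆ j : Fin d,
      ‖⟪a' j, b i⟫‖ * ∑ k ∈ Finset.univ.erase j, ‖⟪a' k, b i⟫‖ := by
  set M := ⨆ i : Fin d, ⨆ j : Fin d,
    ‖⟪a' j, b i⟫‖ * ∑ k ∈ Finset.univ.erase j, ‖⟪a' k, b i⟫‖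
  have hM : ∀ i j, ‖⟪a' j, b i⟫‖ * ∑ k ∈ Finset.univ.erase j, ‖⟪a' k, b i⟫‖ ≤ M := by
    intro i j
    exact le_ciSup_of_le (Set.finite_range _).bddAbove i
      (le_ciSup (f := fun j => ‖⟪a' j, b i⟫‖ * ∑ k ∈ univ.erase j, ‖⟪a' k, b i⟫‖)
        (Set.finite_range _).bddAbove j)
  have hM0 : 0 ≤ M := Real.iSup_nonneg fun i => Real.iSup_nonneg fun j => by positivity
  refine Real.iSup_le (fun ⟨ρ, hρ⟩ => Real.iSup_le (fun i => ?_) hM0) hM0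
  calc ‖LinearMap.trace ℂ H (ρ ∘ₗ distOp a' b i)‖
      ≤ ∑ j, re ⟪a' j, ρ (a' j)⟫ * (‖⟪a' j, b i⟫‖ * ∑ k ∈ univ.erase j, ‖⟪a' k, b i⟫‖) := by
        rw [trace_comp_distOp]
        exact hρ.isPositive.norm_sum_sum_erase_le _ _
    _ ≤ ∑ j, re ⟪a' j, ρ (a' j)⟫ * M :=
        sum_le_sum fun j _ => mul_le_mul_of_nonneg_left (hM i j) (hρ.2.1 _)
    _ = M := by rw [← sum_mul, hρ.sum_re_inner_eq_one, one_mul]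

/-- upper bound for the disturbance via the Frobenius bound. -/
theorem disturbance_upper_bound_two {d : ℕ} (hd : 2 ≤ d)
    (a' b : OrthonormalBasis (Fin d) ℂ H) :
    siDist (⇑a') (⇑b) ≤ ⨆ i : Fin d, ⨆ j : Fin d,
      ‖⟪a' j, b i⟫‖ * ∑ k ∈ Finset.univ.erase j, ‖⟪a' k, b i⟫‖ :=
  disturbance_upper_bound_two_general a' b
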